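/- For a positive-definite 2N×2N matrix Γ of the form Γ = O D Oᵀ with O orthogonal symplectic and D = ⊕_k ν_k I_2, ν_k > 0, and for any single-mode squeezing matrix 𝔖 = ⊕_i diag(e^{r_i}, e^{−r_i}) with not all r_i = 0, one has Tr(𝔖 Γ 𝔖) > Tr(Γ). -/
import Mathlib

open Matrix

/-- The standard symplectic form `Ω = ⊕_{k=1}^N ω`, `ω = [[0,1],[−1,0]]`, on `ℝ^{2N}`. -/
def Omega (N : ℕ) : Matrix (Fin (2*N)) (Fin (2*N)) ℝ :=
  Matrix.of fun i j =>
    if i.val % 2 = 0 ∧ j.val = i.val + 1 then 1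
    else if j.val % 2 = 0 ∧ i.val = j.val + 1 then -1 else 0

/-- The Williamson normal form `⊕_{k=1}^N ν_k I₂`. -/
def williamsonDiag (N : ℕ) (ν : Fin N → ℝ) : Matrix (Fin (2*N)) (Fin (2*N)) ℝ :=
  Matrix.of fun i j => if i = j then ν ⟨i.val / 2, by omega⟩ else 0

/-- The single-mode squeezing matrix `𝔖 = ⊕_{i=1}^N diag(e^{r_i}, e^{−r_i})`. -/
noncomputable def squeezer (N : ℕ) (r : Fin N → ℝ) :
    Matrix (Fin (2*N)) (Fin (2*N)) ℝ :=
  Matrix.of fun i j =>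
    if i = j then
      (if i.val % 2 = 0 then Real.exp (r ⟨i.val / 2, by omega⟩)
       else Real.exp (-(r ⟨i.val / 2, by omega⟩)))
    else 0

lemma sum_range_pair (g : ℕ → ℝ) (N : ℕ) :
    ∑ i ∈ Finset.range (2*N), g i = ∑ k ∈ Finset.range N, (g (2*k) + g (2*k+1)) := by
  induction N with
  | zero => simp
  | succ n ih =>
    have h2 : 2*(n+1) = (2*n+1)+1 := by ring
    rw [Finset.sum_range_succ, ← ih, h2, Finset.sum_range_succ, Finset.sum_range_succ]
    ring

lemma fin_sum_pair (N : ℕ) (f : Fin (2*N) → ℝ) :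
    ∑ i, f i = ∑ k : Fin N, (f ⟨2*k.val, by omega⟩ + f ⟨2*k.val+1, by omega⟩) := by
  classical
  have h1 : ∑ i, f i
      = ∑ i ∈ Finset.range (2*N), (fun n => if h : n < 2*N then f ⟨n, h⟩ else 0) i := by
    rw [← Fin.sum_univ_eq_sum_range]
    exact Finset.sum_congr rfl fun i _ => by simp [i.isLt]
  rw [h1, sum_range_pair, ← Fin.sum_univ_eq_sum_range]
  refine Finset.sum_congr rfl fun k _ => ?_
  have h1 : 2*k.val < 2*N := by omega
  have h2 : 2*k.val+1 < 2*N := by omega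
  simp [h1, h2]

lemma squeezer_eq_diagonal (N : ℕ) (r : Fin N → ℝ) :
    squeezer N r = Matrix.diagonal (fun i : Fin (2*N) =>
      if i.val % 2 = 0 then Real.exp (r ⟨i.val / 2, by omega⟩)
      else Real.exp (-(r ⟨i.val / 2, by omega⟩))) := by
  ext i j
  by_cases h : i = j <;> simp [squeezer, Matrix.diagonal, h]

lemma williamson_eq_diagonal (N : ℕ) (ν : Fin N → ℝ) :
    williamsonDiag N ν = Matrix.diagonal (fun i : Fin (2*N) => ν ⟨i.val / 2, by omega⟩) := by
  ext i j
  by_cases h : i = j <;> simp [williamsonDiag, Matrix.diagonal, h]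

lemma omega_apply_pair (N : ℕ) (k : Fin N) (j : Fin (2*N)) :
    Omega N j ⟨2*k.val+1, by omega⟩ = if j.val = 2*k.val then 1 else 0 := by
  unfold Omega
  simp only [Matrix.of_apply]
  by_cases h : j.val = 2*k.val
  · rw [if_pos ⟨by omega, by omega⟩, if_pos h]
  · rw [if_neg (by omega), if_neg (by omega), if_neg h]

lemma omega_apply_pair' (N : ℕ) (k : Fin N) (j : Fin (2*N)) :
    Omega N ⟨2*k.val, by omega⟩ j = if j.val = 2*k.val+1 then 1 else 0 := by
  unfold Omega
  simp only [Matrix.of_apply]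
  by_cases h : j.val = 2*k.val+1
  · rw [if_pos ⟨by omega, by omega⟩, if_pos h]
  · rw [if_neg (by omega), if_neg (by omega), if_neg h]

/-- For a free covariance matrix `Γ = O D Oᵀ` (with `O` orthogonal
symplectic and `D = ⊕_k ν_k I₂`, `ν_k > 0`) and any nontrivial squeezing
`𝔖 = ⊕_i diag(e^{r_i}, e^{−r_i})` with some `r_i ≠ 0`, we have
`Tr(𝔖 Γ 𝔖) > Tr(Γ)`. -/
theorem squeezing_increases_energy_of_free_state
    (N : ℕ) (O : Matrix (Fin (2*N)) (Fin (2*N)) ℝ)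
    (hO1 : O * Oᵀ = 1) (hO2 : O * Omega N * Oᵀ = Omega N)
    (ν : Fin N → ℝ) (hν : ∀ k, 0 < ν k)
    (Γ : Matrix (Fin (2*N)) (Fin (2*N)) ℝ)
    (hΓ : Γ = O * williamsonDiag N ν * Oᵀ)
    (r : Fin N → ℝ) (hr : ∃ i, r i ≠ 0) :
    Γ.trace < (squeezer N r * Γ * squeezer N r).trace := by
  classical
  set d : Fin (2*N) → ℝ := fun i =>
      if i.val % 2 = 0 then Real.exp (r ⟨i.val / 2, by omega⟩)
      else Real.exp (-(r ⟨i.val / 2, by omega⟩)) with hd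
  -- diagonal entries of Γ are positive
  have hΓdiag : ∀ i, Γ i i = ∑ j, ν ⟨j.val / 2, by omega⟩ * (O i j)^2 := by
    intro i
    rw [hΓ, williamson_eq_diagonal, Matrix.mul_apply]
    refine Finset.sum_congr rfl fun j _ => ?_
    rw [Matrix.mul_diagonal, Matrix.transpose_apply]
    ring
  have hrow : ∀ i, ∑ j, (O i j)^2 = 1 := by
    intro i
    have h := congrFun (congrFun hO1 i) i
    rw [Matrix.mul_apply] at h
    simpa [Matrix.transpose_apply, pow_two, Matrix.one_apply] using h
  have hΓpos : ∀ i, 0 < Γ i i := by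
    intro i
    rw [hΓdiag]
    have hex : ∃ j, (O i j)^2 ≠ 0 := by
      by_contra h
      push_neg at h
      have h0 : ∑ j, (O i j)^2 = 0 := Finset.sum_eq_zero fun j _ => h j
      rw [hrow i] at h0
      norm_num at h0
    obtain ⟨j0, hj0⟩ := hex
    refine Finset.sum_pos' (fun j _ => mul_nonneg (hν _).le (sq_nonneg _)) ?_
    exact ⟨j0, Finset.mem_univ _,
      mul_pos (hν _) (lt_of_le_of_ne (sq_nonneg _) (Ne.symm hj0))⟩
  -- Γ commutes with Omega
  have hOtO : Oᵀ * O = 1 := mul_eq_one_comm.mp hO1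
  have hOΩ : O * Omega N = Omega N * O := by
    have h := congrArg (fun M => M * O) hO2
    simpa [Matrix.mul_assoc, hOtO] using h
  have hOtΩ : Oᵀ * Omega N = Omega N * Oᵀ := by
    calc Oᵀ * Omega N = Oᵀ * Omega N * (O * Oᵀ) := by rw [hO1, Matrix.mul_one]
      _ = Oᵀ * (Omega N * O) * Oᵀ := by simp only [Matrix.mul_assoc]
      _ = Oᵀ * (O * Omega N) * Oᵀ := by rw [hOΩ]
      _ = Oᵀ * O * (Omega N * Oᵀ) := by simp only [Matrix.mul_assoc]
      _ = Omega N * Oᵀ := by rw [hOtO, Matrix.one_mul]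
  have hDΩ : williamsonDiag N ν * Omega N = Omega N * williamsonDiag N ν := by
    ext i j
    rw [williamson_eq_diagonal, Matrix.diagonal_mul, Matrix.mul_diagonal]
    unfold Omega
    simp only [Matrix.of_apply]
    split_ifs with h1 h2
    · rw [mul_one, one_mul]
      congr 1
      exact Fin.ext (show i.val / 2 = j.val / 2 by omega)
    · rw [mul_neg, neg_mul, mul_one, one_mul]
      congr 2
      exact Fin.ext (show i.val / 2 = j.val / 2 by omega)
    · rw [mul_zero, zero_mul]
  have hΓΩ : Γ * Omega N = Omega N * Γ := by
    rw [hΓ]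
    calc O * williamsonDiag N ν * Oᵀ * Omega N
        = O * (williamsonDiag N ν * (Oᵀ * Omega N)) := by simp only [Matrix.mul_assoc]
      _ = O * (williamsonDiag N ν * Omega N * Oᵀ) := by
          rw [hOtΩ, ← Matrix.mul_assoc (williamsonDiag N ν)]
      _ = O * (Omega N * williamsonDiag N ν * Oᵀ) := by rw [hDΩ]
      _ = O * Omega N * (williamsonDiag N ν * Oᵀ) := by simp only [Matrix.mul_assoc]
      _ = Omega N * O * (williamsonDiag N ν * Oᵀ) := by rw [hOΩ]
      _ = Omega N * (O * williamsonDiag N ν * Oᵀ) := by simp only [Matrix.mul_assoc]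
  -- pair equality of diagonal entries
  have hpair : ∀ k : Fin N,
      Γ ⟨2*k.val, by omega⟩ ⟨2*k.val, by omega⟩
        = Γ ⟨2*k.val+1, by omega⟩ ⟨2*k.val+1, by omega⟩ := by
    intro k
    have h := congrFun (congrFun hΓΩ ⟨2*k.val, by omega⟩) ⟨2*k.val+1, by omega⟩
    rw [Matrix.mul_apply, Matrix.mul_apply] at h
    have hL : ∑ j, Γ ⟨2*k.val, by omega⟩ j * Omega N j ⟨2*k.val+1, by omega⟩
        = Γ ⟨2*k.val, by omega⟩ ⟨2*k.val, by omega⟩ := by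
      rw [Finset.sum_eq_single (⟨2*k.val, by omega⟩ : Fin (2*N))]
      · rw [omega_apply_pair]; simp
      · intro j _ hj
        rw [omega_apply_pair, if_neg, mul_zero]
        exact fun hv => hj (Fin.ext hv)
      · intro h; exact absurd (Finset.mem_univ _) h
    have hR : ∑ j, Omega N ⟨2*k.val, by omega⟩ j * Γ j ⟨2*k.val+1, by omega⟩
        = Γ ⟨2*k.val+1, by omega⟩ ⟨2*k.val+1, by omega⟩ := by
      rw [Finset.sum_eq_single (⟨2*k.val+1, by omega⟩ : Fin (2*N))]
      · rw [omega_apply_pair']; simp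
      · intro j _ hj
        rw [omega_apply_pair', if_neg, zero_mul]
        exact fun hv => hj (Fin.ext hv)
      · intro h; exact absurd (Finset.mem_univ _) h
    rw [hL, hR] at h
    exact h
  -- traces as sums over modes
  have hdiagS : ∀ i, (squeezer N r * Γ * squeezer N r) i i = d i * Γ i i * d i := by
    intro i
    rw [squeezer_eq_diagonal, Matrix.mul_assoc, Matrix.diagonal_mul, Matrix.mul_diagonal]
    simp only [hd]
    ring
  have hidx : ∀ k : Fin N, (⟨(2*k.val)/2, by omega⟩ : Fin N) = k :=
    fun k => Fin.ext (show (2*k.val)/2 = k.val by omega)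
  have hidx' : ∀ k : Fin N, (⟨(2*k.val+1)/2, by omega⟩ : Fin N) = k :=
    fun k => Fin.ext (show (2*k.val+1)/2 = k.val by omega)
  have hd1 : ∀ k : Fin N, d ⟨2*k.val, by omega⟩ = Real.exp (r k) := by
    intro k
    simp only [hd]
    rw [if_pos (by omega)]
    congr 1
    exact congrArg r (hidx k)
  have hd2 : ∀ k : Fin N, d ⟨2*k.val+1, by omega⟩ = Real.exp (-(r k)) := by
    intro k
    simp only [hd]
    rw [if_neg (by omega)]
    congr 2
    exact congrArg r (hidx' k)
  have htr1 : Γ.trace = ∑ k : Fin N,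
      2 * Γ ⟨2*k.val, by omega⟩ ⟨2*k.val, by omega⟩ := by
    rw [Matrix.trace]
    simp only [Matrix.diag]
    rw [fin_sum_pair N (fun i => Γ i i)]
    refine Finset.sum_congr rfl fun k _ => ?_
    rw [← hpair k]
    ring
  have htr2 : (squeezer N r * Γ * squeezer N r).trace = ∑ k : Fin N,
      (Real.exp (r k) * Real.exp (r k) + Real.exp (-(r k)) * Real.exp (-(r k)))
        * Γ ⟨2*k.val, by omega⟩ ⟨2*k.val, by omega⟩ := by
    rw [Matrix.trace]
    simp only [Matrix.diag]
    rw [fin_sum_pair N (fun i => (squeezer N r * Γ * squeezer N r) i i)]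
    refine Finset.sum_congr rfl fun k _ => ?_
    rw [hdiagS, hdiagS, hd1, hd2, ← hpair k]
    ring
  rw [htr1, htr2]
  obtain ⟨i0, hi0⟩ := hr
  have hab : ∀ x : ℝ, Real.exp x * Real.exp (-x) = 1 := by
    intro x
    rw [← Real.exp_add]
    simp
  have key : ∀ x : ℝ, 2 ≤ Real.exp x * Real.exp x + Real.exp (-x) * Real.exp (-x) := by
    intro x
    nlinarith [sq_nonneg (Real.exp x - Real.exp (-x)), hab x]
  have key' : ∀ x : ℝ, x ≠ 0 →
      2 < Real.exp x * Real.exp x + Real.exp (-x) * Real.exp (-x) := by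
    intro x hx
    have hne : Real.exp x ≠ Real.exp (-x) := by
      intro h
      have := Real.exp_injective h
      exact hx (by linarith)
    have h2 : 0 < (Real.exp x - Real.exp (-x))^2 := by
      have := sub_ne_zero.mpr hne
      positivity
    nlinarith [h2, hab x]
  refine Finset.sum_lt_sum (fun k _ => ?_) ⟨i0, Finset.mem_univ _, ?_⟩
  · exact mul_le_mul_of_nonneg_right (key (r k)) (hΓpos _).le
  · exact mul_lt_mul_of_pos_right (key' (r i0) hi0) (hΓpos _)
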